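/- For every integer k ≥ 3, the set A = {a_1,…,a_k} is a resolving set of the graph G_k, and every resolving set of G_k has cardinality at least k; hence the metric dimension of G_k equals k. -/

import Mathlib

/-!
The distance from `a_i` is `1` to the other vertices of `A`, `1` or `2` to `b_S` and `2` or `3`
to `c_S`, according as `a_i ∈ S` or not; so the distances to `A` determine every vertex.

Conversely, let `W` resolve `G_k` and miss some `a_i`. If `b_S, c_S, b_T, c_T ∉ W` for some
`S ≠ T`, every vertex of `(B ∪ C) ∩ W` is equally far from `b_S` and from `b_T`, so a vertex of
`A ∩ W` separates them: `S` and `T` have different traces on `A ∩ W`. Hence at most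
`2 ^ (k - 1)` sets `S` have both `b_S` and `c_S` outside `W`, and `W` contains at least
`2 ^ k - 1 - 2 ^ (k - 1) = 2 ^ (k - 1) - 1 ≥ k` vertices of `B ∪ C`.
-/

open SimpleGraph

/-- `W` is a resolving set of `G`: every pair of distinct vertices is
distinguished by its distance to some vertex of `W`. -/
def IsResolving {V : Type*} (G : SimpleGraph V) (W : Set V) : Prop :=
  ∀ x y : V, x ≠ y → ∃ z ∈ W, G.dist x z ≠ G.dist y z

/-- The metric dimension of `G`: the minimum cardinality of a resolving set. -/
noncomputable def metricDim {V : Type*} (G : SimpleGraph V) : ℕ :=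
  sInf {n | ∃ W : Set V, W.ncard = n ∧ IsResolving G W}

/-- The vertex set of `G_k`: the set `A` (a copy of `Fin k`), the set
`B = {b_S : ∅ ≠ S ⊆ A}` and the set `C = {c_S : ∅ ≠ S ⊆ A}`. -/
abbrev GkVert (k : ℕ) :=
  Fin k ⊕ ({S : Finset (Fin k) // S.Nonempty} ⊕ {S : Finset (Fin k) // S.Nonempty})

/-- The relation generating the edges of `G_k`: each of `A`, `B`, `C` is a clique,
`b_S` is adjacent to exactly the vertices of `A` in `S`, and `b_S` is adjacent to `c_S`. -/
def GkRel (k : ℕ) : GkVert k → GkVert k → Prop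
  | Sum.inl _, Sum.inl _ => True
  | Sum.inl a, Sum.inr (Sum.inl S) => a ∈ S.val
  | Sum.inr (Sum.inl _), Sum.inr (Sum.inl _) => True
  | Sum.inr (Sum.inl S), Sum.inr (Sum.inr T) => S = T
  | Sum.inr (Sum.inr _), Sum.inr (Sum.inr _) => True
  | _, _ => False

/-- The graph `G_k` from Definition 3.5. -/
def Gk (k : ℕ) : SimpleGraph (GkVert k) := SimpleGraph.fromRel (GkRel k)

namespace SimpleGraph

variable {V : Type*} {G : SimpleGraph V} {u v w x : V}

lemma dist_eq_two_of_adj_of_adj (hne : u ≠ v) (hnadj : ¬G.Adj u v) (huw : G.Adj u w)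
    (hwv : G.Adj w v) : G.dist u v = 2 := by
  have hr : G.Reachable u v := (huw.toWalk.concat hwv).reachable
  have h2 : G.edist u v = 2 := edist_eq_two_iff.mpr ⟨hne, hnadj, w, huw, hwv.symm⟩
  exact_mod_cast hr.coe_dist_eq_edist.trans h2

lemma dist_eq_three_of_adj_of_adj_of_adj (hne : u ≠ v) (hnadj : ¬G.Adj u v)
    (hcommon : G.commonNeighbors u v = ∅) (huw : G.Adj u w) (hwx : G.Adj w x)
    (hxv : G.Adj x v) : G.dist u v = 3 := by
  let p : G.Walk u v := .cons huw (.cons hwx hxv.toWalk)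
  have hlt : 2 < G.edist u v := two_lt_edist_iff.mpr ⟨hne, hnadj, hcommon⟩
  have hle : G.edist u v ≤ 3 := p.edist_le
  have h3 : G.edist u v = 3 := le_antisymm hle (Order.add_one_le_of_lt hlt)
  exact_mod_cast p.reachable.coe_dist_eq_edist.trans h3

end SimpleGraph

lemma Finset.natCard_subtype_nonempty (α : Type*) [Fintype α] :
    Nat.card {S : Finset α // S.Nonempty} = 2 ^ Nat.card α - 1 := by
  classical
  simp only [Finset.nonempty_iff_ne_empty, Nat.card_eq_fintype_card,
    Fintype.card_subtype_compl, Fintype.card_subtype_eq, Fintype.card_finset]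

lemma metricDim_eq_ncard {V : Type*} {G : SimpleGraph V} {W : Set V} (hW : IsResolving G W)
    (hmin : ∀ W' : Set V, IsResolving G W' → W.ncard ≤ W'.ncard) : metricDim G = W.ncard :=
  le_antisymm (Nat.sInf_le ⟨W, rfl, hW⟩)
    (le_csInf ⟨_, W, rfl, hW⟩ fun _ ⟨W', hW'n, hW'⟩ ↦ hW'n ▸ hmin W' hW')

namespace Gk

variable {k : ℕ} {i j : Fin k} {S T : {S : Finset (Fin k) // S.Nonempty}}

@[simp] lemma adj_inl_inl : (Gk k).Adj (.inl i) (.inl j) ↔ i ≠ j := by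
  simp [Gk, GkRel]

@[simp] lemma adj_inl_inrl : (Gk k).Adj (.inl i) (.inr (.inl S)) ↔ i ∈ S.1 := by
  simp [Gk, GkRel]

@[simp] lemma not_adj_inl_inrr : ¬(Gk k).Adj (.inl i) (.inr (.inr S)) := by
  simp [Gk, GkRel]

@[simp] lemma adj_inrl_inrl : (Gk k).Adj (.inr (.inl S)) (.inr (.inl T)) ↔ S ≠ T := by
  simp [Gk, GkRel]

@[simp] lemma adj_inrl_inrr : (Gk k).Adj (.inr (.inl S)) (.inr (.inr T)) ↔ S = T := by
  simp [Gk, GkRel]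

lemma dist_inl_inl : (Gk k).dist (.inl i) (.inl j) = if i = j then 0 else 1 := by
  split_ifs with h
  · simp [h]
  · exact dist_eq_one_iff_adj.mpr (adj_inl_inl.mpr h)

lemma dist_inl_inrl : (Gk k).dist (.inl i) (.inr (.inl S)) = if i ∈ S.1 then 1 else 2 := by
  split_ifs with h
  · exact dist_eq_one_iff_adj.mpr (adj_inl_inrl.mpr h)
  · let U : {S : Finset (Fin k) // S.Nonempty} := ⟨insert i S.1, Finset.insert_nonempty _ _⟩
    have hUS : U ≠ S := fun hUS ↦ h (hUS ▸ Finset.mem_insert_self i S.1)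
    exact dist_eq_two_of_adj_of_adj (by simp) (by simpa using h)
      (adj_inl_inrl.mpr (Finset.mem_insert_self i S.1)) (adj_inrl_inrl.mpr hUS)

lemma dist_inl_inrr : (Gk k).dist (.inl i) (.inr (.inr S)) = if i ∈ S.1 then 2 else 3 := by
  split_ifs with h
  · exact dist_eq_two_of_adj_of_adj (by simp) (by simp) (adj_inl_inrl.mpr h)
      (adj_inrl_inrr.mpr rfl)
  · let U : {S : Finset (Fin k) // S.Nonempty} := ⟨{i}, Finset.singleton_nonempty i⟩
    have hUS : U ≠ S := fun hUS ↦ h (hUS ▸ Finset.mem_singleton_self i)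
    refine dist_eq_three_of_adj_of_adj_of_adj (by simp) (by simp) ?_
      (adj_inl_inrl.mpr (Finset.mem_singleton_self i)) (adj_inrl_inrl.mpr hUS)
      (adj_inrl_inrr.mpr rfl)
    refine Set.eq_empty_of_forall_notMem fun v ⟨hiv, hvS⟩ ↦ ?_
    rcases v with _ | V | V
    · simp [adj_comm] at hvS
    · obtain rfl : V = S := by simpa [adj_comm] using hvS
      exact h (adj_inl_inrl.mp hiv)
    · exact not_adj_inl_inrr hiv

lemma dist_inrl_inrl : (Gk k).dist (.inr (.inl S)) (.inr (.inl T)) = if S = T then 0 else 1 := by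
  split_ifs with h
  · simp [h]
  · exact dist_eq_one_iff_adj.mpr (adj_inrl_inrl.mpr h)

lemma dist_inrl_inrr : (Gk k).dist (.inr (.inl S)) (.inr (.inr T)) = if S = T then 1 else 2 := by
  split_ifs with h
  · exact dist_eq_one_iff_adj.mpr (adj_inrl_inrr.mpr h)
  · exact dist_eq_two_of_adj_of_adj (by simp) (by simpa using h) (adj_inrl_inrl.mpr h)
      (adj_inrl_inrr.mpr rfl)

theorem isResolving_range_inl (k : ℕ) :
    IsResolving (Gk k) (Set.range (Sum.inl : Fin k → GkVert k)) := by
  suffices ∀ x y : GkVert k, x ≠ y → ∃ i, (Gk k).dist (.inl i) x ≠ (Gk k).dist (.inl i) y by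
    intro x y hxy
    obtain ⟨i, hi⟩ := this x y hxy
    exact ⟨.inl i, ⟨i, rfl⟩, by rwa [dist_comm, dist_comm (u := y)]⟩
  rintro (i | S | S) (j | T | T) hxy <;> simp only [dist_inl_inl, dist_inl_inrl, dist_inl_inrr]
  · exact ⟨i, by grind⟩
  · exact ⟨i, by grind⟩
  · exact ⟨i, by grind⟩
  · exact ⟨j, by grind⟩
  · obtain ⟨i, hi⟩ := Finset.symmDiff_nonempty.mpr
      fun h : S.1 = T.1 ↦ hxy (by rw [Subtype.ext h])
    exact ⟨i, by grind [Finset.mem_symmDiff]⟩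
  · exact ⟨S.2.choose, by grind⟩
  · exact ⟨j, by grind⟩
  · exact ⟨T.2.choose, by grind⟩
  · obtain ⟨i, hi⟩ := Finset.symmDiff_nonempty.mpr
      fun h : S.1 = T.1 ↦ hxy (by rw [Subtype.ext h])
    exact ⟨i, by grind [Finset.mem_symmDiff]⟩

variable {W : Set (GkVert k)}

lemma injOn_inter_preimage_inl (hW : IsResolving (Gk k) W) :
    Set.InjOn (fun S : {S : Finset (Fin k) // S.Nonempty} ↦ (S.1 : Set (Fin k)) ∩ Sum.inl ⁻¹' W)
      {S | .inr (.inl S) ∉ W ∧ .inr (.inr S) ∉ W} := by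
  rintro S ⟨hbS, hcS⟩ T ⟨hbT, hcT⟩ hST
  by_contra hne
  obtain ⟨z, hz, hdist⟩ := hW (.inr (.inl S)) (.inr (.inl T)) (by simpa using hne)
  apply hdist
  rcases z with i | U | U
  · have hi : i ∈ S.1 ↔ i ∈ T.1 := by simpa [hz] using congrArg (i ∈ ·) hST
    simp only [dist_comm (v := Sum.inl i), dist_inl_inrl, hi]
  · have hSU : S ≠ U := by rintro rfl; exact hbS hz
    have hTU : T ≠ U := by rintro rfl; exact hbT hz
    simp only [dist_inrl_inrl, hSU, hTU, if_false]
  · have hSU : S ≠ U := by rintro rfl; exact hcS hz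
    have hTU : T ≠ U := by rintro rfl; exact hcT hz
    simp only [dist_inrl_inrr, hSU, hTU, if_false]

lemma two_pow_sub_one_le_two_pow_add_ncard (hW : IsResolving (Gk k) W) :
    2 ^ k - 1 ≤ 2 ^ (Sum.inl ⁻¹' W).ncard + W.ncard := by
  set N : Set {S : Finset (Fin k) // S.Nonempty} := {S | .inr (.inl S) ∉ W ∧ .inr (.inr S) ∉ W}
  have hN : N.ncard ≤ 2 ^ (Sum.inl ⁻¹' W).ncard := by
    rw [← Set.ncard_powerset]
    exact Set.ncard_le_ncard_of_injOn _ (fun S _ ↦ Set.inter_subset_right)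
      (injOn_inter_preimage_inl hW)
  have hNc : Nᶜ.ncard ≤ W.ncard := by
    classical
    refine Set.ncard_le_ncard_of_injOn
      (fun S ↦ if .inr (.inl S) ∈ W then .inr (.inl S) else .inr (.inr S)) ?_ ?_
    · intro S hS
      by_cases hb : .inr (.inl S) ∈ W <;> simp_all [N]
    · intro S _ T _ hST
      by_cases hbS : .inr (.inl S) ∈ W <;> by_cases hbT : .inr (.inl T) ∈ W <;> simp_all
  have := Set.ncard_add_ncard_compl N
  rw [Finset.natCard_subtype_nonempty, Nat.card_fin] at this
  omega

theorem le_ncard_of_isResolving (hk : 3 ≤ k) (hW : IsResolving (Gk k) W) : k ≤ W.ncard := by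
  have hmk : (Sum.inl ⁻¹' W).ncard ≤ k := by simpa using Set.ncard_le_card (Sum.inl ⁻¹' W)
  have hmW : (Sum.inl ⁻¹' W).ncard ≤ W.ncard :=
    Set.ncard_le_ncard_of_injOn Sum.inl (fun _ h ↦ h) Sum.inl_injective.injOn
  rcases hmk.eq_or_lt with hmk | hmk
  · omega
  have hpow : 2 ^ (Sum.inl ⁻¹' W).ncard ≤ 2 ^ (k - 1) := Nat.pow_le_pow_right two_pos (by omega)
  have hk2 : k - 2 < 2 ^ (k - 2) := Nat.lt_two_pow_self
  have h1 : 2 ^ (k - 1) = 2 * 2 ^ (k - 2) := by rw [← pow_succ']; congr 1; omega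
  have h2 : 2 ^ k = 2 * 2 ^ (k - 1) := by rw [← pow_succ']; congr 1; omega
  have := two_pow_sub_one_le_two_pow_add_ncard hW
  omega

end Gk

theorem dim_Gk (k : ℕ) (hk : 3 ≤ k) :
    IsResolving (Gk k) (Set.range (Sum.inl : Fin k → GkVert k)) ∧
    (∀ W : Set (GkVert k), IsResolving (Gk k) W → k ≤ W.ncard) ∧
    metricDim (Gk k) = k := by
  have hA := Gk.isResolving_range_inl k
  have hcard : (Set.range (Sum.inl : Fin k → GkVert k)).ncard = k := by
    simp [Set.ncard_range_of_injective Sum.inl_injective]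
  refine ⟨hA, fun W ↦ Gk.le_ncard_of_isResolving hk, ?_⟩
  refine (metricDim_eq_ncard hA fun W hW ↦ ?_).trans hcard
  exact hcard.symm ▸ Gk.le_ncard_of_isResolving hk hW
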